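/- For every PARITY_n program Π with no singleton loops in which every rule body is consistent, there exists a standard PARITY_n program Π′ with |Π′| ≤ |Π|. -/

import Mathlib

/-- A rule element: ⊤, ⊥, a variable `x`, `not x`, or `not not x`.
Variables are indexed by natural numbers; the variable `x_i` of the paper is index `i - 1`. -/
inductive RuleElem : Type
  | top : RuleElem
  | bot : RuleElem
  | pos : ℕ → RuleElem
  | neg : ℕ → RuleElem
  | negneg : ℕ → RuleElem
  deriving DecidableEq

/-- A rule `H ← B`: the head is a variable (`some x`) or ⊥ (`none`);
the body is a finite set of rule elements. -/
structure Rule : Type where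
  head : Option ℕ
  body : Finset RuleElem
  deriving DecidableEq

/-- A canonical program is a finite set of rules. -/
abbrev Program : Type := Finset Rule

/-- Satisfaction of a rule element by a set of variables. -/
def satElem (I : Set ℕ) : RuleElem → Prop
  | .top => True
  | .bot => False
  | .pos x => x ∈ I
  | .neg x => x ∉ I
  | .negneg x => x ∈ I

/-- `I ⊨ B`: `I` satisfies every element of the body `B`. -/
def satBody (I : Set ℕ) (B : Finset RuleElem) : Prop := ∀ e ∈ B, satElem I e

/-- `J` is closed under the program `Π`: for every rule `H ← B` with `J ⊨ B`,
the head is a variable belonging to `J`. -/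
def closedUnder (J : Set ℕ) (P : Program) : Prop :=
  ∀ r ∈ P, satBody J r.body → ∃ x, r.head = some x ∧ x ∈ J

/-- `Cn P`: the least set of variables closed under `P` (used for basic programs). -/
def Cn (P : Program) : Set ℕ := ⋂₀ {J : Set ℕ | closedUnder J P}

/-- The reduction of a rule element with respect to `I`. -/
def reduceElem (I : Finset ℕ) : RuleElem → RuleElem
  | .negneg x => if x ∈ I then .top else .bot
  | .neg x => if x ∈ I then .bot else .top
  | e => e

/-- The reduct `P^I` of a canonical program. -/
def reduct (P : Program) (I : Finset ℕ) : Program :=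
  P.image (fun r => ⟨r.head, r.body.image (reduceElem I)⟩)

/-- `I` is an answer set of `P` iff `I = Cn(P^I)`. -/
def isAnswerSet (P : Program) (I : Finset ℕ) : Prop :=
  (I : Set ℕ) = Cn (reduct P I)

/-- The variables occurring in a rule element. -/
def elemVars : RuleElem → Finset ℕ
  | .top => ∅
  | .bot => ∅
  | .pos x => {x}
  | .neg x => {x}
  | .negneg x => {x}

/-- The variables occurring in a rule. -/
def ruleVars (r : Rule) : Finset ℕ :=
  (r.head.elim ∅ fun x => {x}) ∪ r.body.biUnion elemVars

/-- The variables occurring in a program. -/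
def progVars (P : Program) : Finset ℕ := P.biUnion ruleVars

/-- A program is normal if no `not not x` occurs in it. -/
def isNormal (P : Program) : Prop := ∀ r ∈ P, ∀ x, RuleElem.negneg x ∉ r.body

/-- `P` is a PARITY_n program: all its variables are among `{x_1, …, x_n}`
(indices `0, …, n-1`) and its answer sets, as subsets of `{x_1, …, x_n}`,
are exactly the subsets of odd cardinality. -/
def isParityProgram (n : ℕ) (P : Program) : Prop :=
  progVars P ⊆ Finset.range n ∧
  ∀ I : Finset ℕ, isAnswerSet P I ↔ (I ⊆ Finset.range n ∧ Odd I.card)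

/-- `M(Comp(P))`, the models (subsets of `V`) of the completion of `P` over `V`:
for each variable `x ∈ V`, `x` holds iff the body of some rule with head `x` is
(classically) satisfied; and the body of no rule with head ⊥ is satisfied.
(The classical reading of `not` coincides with `satElem`.) -/
def compModels (V : Finset ℕ) (P : Program) : Set (Finset ℕ) :=
  {I | I ⊆ V ∧
    (∀ x ∈ V, (x ∈ I ↔ ∃ r ∈ P, r.head = some x ∧ satBody (↑I) r.body)) ∧
    ∀ r ∈ P, r.head = none → ¬ satBody (↑I) r.body}

/-- `P` has no singleton loops: no rule `x ← B` with head a variable `x ∈ var(B)`. -/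
def noSingletonLoops (P : Program) : Prop :=
  ∀ r ∈ P, ∀ x, r.head = some x → RuleElem.pos x ∉ r.body

/-- `S(B)`: the subsets of the ambient variable set `{x_1, …, x_n}` satisfying `B`. -/
def SB (n : ℕ) (B : Finset RuleElem) : Set (Finset ℕ) :=
  {I | I ⊆ Finset.range n ∧ satBody (↑I) B}

/-- Every rule body of `P` is consistent (w.r.t. the ambient variable set). -/
def allBodiesConsistent (n : ℕ) (P : Program) : Prop :=
  ∀ r ∈ P, (SB n r.body).Nonempty

/-- A PARITY_n program is standard if it has no singleton loops, every rule body is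
consistent, and for every rule `x ← B` with head a variable `x`, if `S(B ∪ {x})` is
a singleton then `not not x ∉ B`. -/
def isStandard (n : ℕ) (P : Program) : Prop :=
  isParityProgram n P ∧ noSingletonLoops P ∧ allBodiesConsistent n P ∧
    ∀ r ∈ P, ∀ x, r.head = some x →
      (∃ I : Finset ℕ, SB n (insert (RuleElem.pos x) r.body) = {I}) →
      RuleElem.negneg x ∉ r.body

/-! ### Auxiliary development -/

attribute [local instance] Classical.propDecidable

lemma satBody_image {K : Set ℕ} {J : Finset ℕ} {B : Finset RuleElem} :
    satBody K (B.image (reduceElem J)) ↔ ∀ e ∈ B, satElem K (reduceElem J e) := by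
  constructor
  · intro h e he; exact h _ (Finset.mem_image_of_mem _ he)
  · intro h e he
    obtain ⟨e', he', rfl⟩ := Finset.mem_image.mp he
    exact h e' he'

lemma satElem_reduce_mono {K K' : Set ℕ} (hKK : K ⊆ K') {J : Finset ℕ} :
    ∀ e, satElem K (reduceElem J e) → satElem K' (reduceElem J e) := by
  intro e
  cases e with
  | pos y => exact fun h => hKK h
  | top => exact fun h => h
  | bot => exact fun h => h
  | neg y => by_cases hy : y ∈ J <;> simp [reduceElem, hy, satElem]
  | negneg y => by_cases hy : y ∈ J <;> simp [reduceElem, hy, satElem]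

lemma satElem_reduce_self {J : Finset ℕ} :
    ∀ e, satElem ↑J (reduceElem J e) ↔ satElem ↑J e := by
  intro e
  cases e with
  | pos y => exact Iff.rfl
  | top => exact Iff.rfl
  | bot => exact Iff.rfl
  | neg y => by_cases hy : y ∈ J <;> simp [reduceElem, hy, satElem]
  | negneg y => by_cases hy : y ∈ J <;> simp [reduceElem, hy, satElem]

lemma Cn_subset {Q : Program} {K : Set ℕ} (h : closedUnder K Q) : Cn Q ⊆ K :=
  Set.sInter_subset_of_mem h

lemma fires_le_sat {C : Set ℕ} {J : Finset ℕ} {B : Finset RuleElem} (hC : C ⊆ ↑J)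
    (h : satBody C (B.image (reduceElem J))) : satBody ↑J B :=
  fun e he => (satElem_reduce_self e).mp (satElem_reduce_mono hC e (satBody_image.mp h e he))

lemma sat_to_fires {J : Finset ℕ} {B : Finset RuleElem} (h : satBody ↑J B) :
    satBody ↑J (B.image (reduceElem J)) :=
  satBody_image.mpr fun e he => (satElem_reduce_self e).mpr (h e he)

lemma Cn_closed {Q : Program} {J : Finset ℕ} {K0 : Set ℕ}
    (hK0 : closedUnder K0 (reduct Q J)) :
    closedUnder (Cn (reduct Q J)) (reduct Q J) := by
  intro s hs hsat
  obtain ⟨r, hrQ, rfl⟩ := Finset.mem_image.mp hs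
  have hmono : ∀ K : Set ℕ, closedUnder K (reduct Q J) →
      satBody K (r.body.image (reduceElem J)) := by
    intro K hK
    have hCnK : Cn (reduct Q J) ⊆ K := Cn_subset hK
    exact satBody_image.mpr fun e he =>
      satElem_reduce_mono hCnK e (satBody_image.mp hsat e he)
  obtain ⟨x, hx1, _⟩ := hK0 _ (Finset.mem_image_of_mem _ hrQ) (hmono K0 hK0)
  refine ⟨x, hx1, ?_⟩
  refine Set.mem_sInter.mpr fun K hK => ?_
  obtain ⟨x', hx'1, hx'2⟩ := hK _ (Finset.mem_image_of_mem _ hrQ) (hmono K hK)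
  have hxx : x' = x := (Option.some.inj (hx1.symm.trans hx'1)).symm
  exact hxx ▸ hx'2

lemma answer_closed {Q : Program} {J : Finset ℕ} (h : isAnswerSet Q J) :
    closedUnder ↑J (reduct Q J) := by
  obtain ⟨K0, hK0⟩ : ∃ K : Set ℕ, closedUnder K (reduct Q J) := by
    by_contra hne
    push_neg at hne
    have hempty : {K : Set ℕ | closedUnder K (reduct Q J)} = ∅ := by
      ext K
      simp only [Set.mem_setOf_eq, Set.mem_empty_iff_false, iff_false]
      exact hne K
    have h2 : (↑J : Set ℕ) = Set.univ := by
      rw [h]; unfold Cn; rw [hempty, Set.sInter_empty]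
    obtain ⟨m, hm⟩ := Infinite.exists_notMem_finset J
    have : m ∈ (↑J : Set ℕ) := h2 ▸ Set.mem_univ m
    exact hm (by exact_mod_cast this)
  have hcl := Cn_closed hK0
  rw [h]
  exact hcl

lemma sandwich {Q1 Q2 : Program} {J : Finset ℕ} (h1 : isAnswerSet Q1 J)
    (hA : closedUnder ↑J (reduct Q2 J))
    (hB : closedUnder (Cn (reduct Q2 J)) (reduct Q1 J)) : isAnswerSet Q2 J := by
  have h2 : Cn (reduct Q2 J) ⊆ ↑J := Cn_subset hA
  have h3 : (↑J : Set ℕ) ⊆ Cn (reduct Q2 J) := by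
    rw [h1]; exact Cn_subset hB
  exact Set.Subset.antisymm h3 h2

/-- The condition under which a rule `x ← B` may be non-standard. -/
def BadCond (n x : ℕ) (B : Finset RuleElem) : Prop :=
  RuleElem.negneg x ∈ B ∧ ∃ I : Finset ℕ, SB n (insert (RuleElem.pos x) B) = {I}

/-- The replacement body used in the standardization. -/
def modBody (n : ℕ) (I₀ : Finset ℕ) (x : ℕ) (B : Finset RuleElem) : Finset RuleElem :=
  B.erase (RuleElem.negneg x) ∪ (Finset.range n \ I₀).image RuleElem.neg

noncomputable def tfAux (n x : ℕ) (B : Finset RuleElem) : Option Rule :=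
  if h : BadCond n x B then
    if Odd h.2.choose.card then some ⟨some x, modBody n h.2.choose x B⟩ else none
  else some ⟨some x, B⟩

noncomputable def tf (n : ℕ) (r : Rule) : Option Rule :=
  match r.head with
  | none => some r
  | some x => tfAux n x r.body

noncomputable def Pstd (n : ℕ) (P : Program) : Program :=
  P.biUnion fun r => (tf n r).toFinset

lemma mem_Pstd {n : ℕ} {P : Program} {s : Rule} :
    s ∈ Pstd n P ↔ ∃ r ∈ P, tf n r = some s := by
  simp only [Pstd, Finset.mem_biUnion, Option.mem_toFinset, Option.mem_def]

lemma keyA {n x : ℕ} {B : Finset RuleElem} {I₀ : Finset ℕ}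
    (hI : SB n (insert (RuleElem.pos x) B) = {I₀}) {J : Finset ℕ}
    (hJn : J ⊆ Finset.range n) (hxJ : x ∉ J)
    (hsat : satBody ↑J (modBody n I₀ x B)) : insert x J = I₀ := by
  have hI₀mem : I₀ ∈ SB n (insert (RuleElem.pos x) B) := by rw [hI]; rfl
  obtain ⟨hI₀sub, hI₀sat⟩ := hI₀mem
  have hxI₀ : x ∈ I₀ := by
    have := hI₀sat _ (Finset.mem_insert_self (RuleElem.pos x) B)
    simpa [satElem] using this
  have hI₀B : satBody ↑I₀ B := fun e he => hI₀sat e (Finset.mem_insert_of_mem he)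
  have hnegx : RuleElem.neg x ∉ B := by
    intro hmem
    have := hI₀B _ hmem
    simp only [satElem, Finset.mem_coe] at this
    exact this hxI₀
  have hmem : insert x J ∈ SB n (insert (RuleElem.pos x) B) := by
    refine ⟨?_, ?_⟩
    · intro y hy
      rcases Finset.mem_insert.mp hy with rfl | hy
      · exact hI₀sub hxI₀
      · exact hJn hy
    · intro e he
      rcases Finset.mem_insert.mp he with rfl | heB
      · show x ∈ (↑(insert x J) : Set ℕ)
        exact_mod_cast Finset.mem_insert_self x J
      · by_cases henn : e = RuleElem.negneg x
        · subst henn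
          show x ∈ (↑(insert x J) : Set ℕ)
          exact_mod_cast Finset.mem_insert_self x J
        · have heB' : e ∈ modBody n I₀ x B :=
            Finset.mem_union_left _ (Finset.mem_erase.mpr ⟨henn, heB⟩)
          have hsatJ := hsat e heB'
          cases e with
          | top => trivial
          | bot => exact hsatJ.elim
          | pos y =>
            show y ∈ (↑(insert x J) : Set ℕ)
            simp only [satElem, Finset.mem_coe] at hsatJ
            exact_mod_cast Finset.mem_insert_of_mem hsatJ
          | negneg y =>
            show y ∈ (↑(insert x J) : Set ℕ)
            simp only [satElem, Finset.mem_coe] at hsatJ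
            exact_mod_cast Finset.mem_insert_of_mem hsatJ
          | neg y =>
            show y ∉ (↑(insert x J) : Set ℕ)
            simp only [satElem, Finset.mem_coe] at hsatJ
            intro hy
            have hy' : y ∈ insert x J := by exact_mod_cast hy
            rcases Finset.mem_insert.mp hy' with rfl | hy2
            · exact hnegx heB
            · exact hsatJ hy2
  rw [hI] at hmem
  exact hmem

lemma keyB {n x : ℕ} {B : Finset RuleElem} {I₀ : Finset ℕ}
    (hI : SB n (insert (RuleElem.pos x) B) = {I₀})
    (hnn : RuleElem.negneg x ∈ B) {J : Finset ℕ} (hJn : J ⊆ Finset.range n)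
    (hsat : satBody ↑J B) : J = I₀ := by
  have hxJ : x ∈ J := by
    have := hsat _ hnn
    simpa [satElem] using this
  have hmem : J ∈ SB n (insert (RuleElem.pos x) B) := by
    refine ⟨hJn, fun e he => ?_⟩
    rcases Finset.mem_insert.mp he with rfl | heB
    · show x ∈ (↑J : Set ℕ)
      exact_mod_cast hxJ
    · exact hsat e heB
  rw [hI] at hmem
  exact hmem

lemma tf_none {n : ℕ} {B : Finset RuleElem} : tf n ⟨none, B⟩ = some ⟨none, B⟩ := rfl

lemma tf_some {n x : ℕ} {B : Finset RuleElem} : tf n ⟨some x, B⟩ = tfAux n x B := rfl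

lemma dir1 {n : ℕ} {P : Program} (hpar : isParityProgram n P) {J : Finset ℕ}
    (h1 : isAnswerSet P J) : isAnswerSet (Pstd n P) J := by
  obtain ⟨hJn, hodd⟩ := (hpar.2 J).mp h1
  have hJc1 : closedUnder ↑J (reduct P J) := answer_closed h1
  have hA : closedUnder ↑J (reduct (Pstd n P) J) := by
    intro s hs hsat
    obtain ⟨r', hr', rfl⟩ := Finset.mem_image.mp hs
    obtain ⟨r, hrP, htf⟩ := mem_Pstd.mp hr'
    obtain ⟨hd, B⟩ := r
    cases hd with
    | none =>
      have hre : r' = ⟨none, B⟩ := (Option.some.inj htf).symm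
      subst hre
      exact hJc1 _ (Finset.mem_image_of_mem _ hrP) hsat
    | some x =>
      rw [tf_some] at htf
      by_cases hbad : BadCond n x B
      · have hI : SB n (insert (RuleElem.pos x) B) = {hbad.2.choose} := hbad.2.choose_spec
        set I₀ := hbad.2.choose with hI₀def
        by_cases hOdd : Odd I₀.card
        · have hre : r' = ⟨some x, modBody n I₀ x B⟩ := by
            rw [tfAux, dif_pos hbad, if_pos hOdd] at htf
            exact (Option.some.inj htf).symm
          subst hre
          refine ⟨x, rfl, ?_⟩
          by_cases hx : x ∈ J
          · exact_mod_cast hx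
          · exfalso
            have hsatJ : satBody ↑J (modBody n I₀ x B) :=
              fires_le_sat (subset_refl _) hsat
            have hins := keyA hI hJn hx hsatJ
            have hcard : I₀.card = J.card + 1 := by
              rw [← hins]; exact Finset.card_insert_of_notMem hx
            rw [hcard] at hOdd
            exact (Nat.odd_add_one.mp hOdd) hodd
        · rw [tfAux, dif_pos hbad, if_neg hOdd] at htf
          exact absurd htf (by simp)
      · have hre : r' = ⟨some x, B⟩ := by
          rw [tfAux, dif_neg hbad] at htf
          exact (Option.some.inj htf).symm
        subst hre
        exact hJc1 _ (Finset.mem_image_of_mem _ hrP) hsat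
  have hCJ : Cn (reduct (Pstd n P) J) ⊆ ↑J := Cn_subset hA
  have hCcl : closedUnder (Cn (reduct (Pstd n P) J)) (reduct (Pstd n P) J) := Cn_closed hA
  have hB : closedUnder (Cn (reduct (Pstd n P) J)) (reduct P J) := by
    intro s hs hsat
    obtain ⟨r, hrP, rfl⟩ := Finset.mem_image.mp hs
    obtain ⟨hd, B⟩ := r
    cases hd with
    | none =>
      have hmem : (⟨none, B⟩ : Rule) ∈ Pstd n P := mem_Pstd.mpr ⟨⟨none, B⟩, hrP, rfl⟩
      exact hCcl _ (Finset.mem_image_of_mem _ hmem) hsat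
    | some x =>
      by_cases hbad : BadCond n x B
      · have hI : SB n (insert (RuleElem.pos x) B) = {hbad.2.choose} := hbad.2.choose_spec
        set I₀ := hbad.2.choose with hI₀def
        have hnn : RuleElem.negneg x ∈ B := hbad.1
        by_cases hOdd : Odd I₀.card
        · have hmem : (⟨some x, modBody n I₀ x B⟩ : Rule) ∈ Pstd n P :=
            mem_Pstd.mpr ⟨⟨some x, B⟩, hrP, by
              rw [tf_some, tfAux, dif_pos hbad, if_pos hOdd]⟩
          by_cases hout : ∀ y ∈ Finset.range n, y ∉ I₀ → y ∉ J
          · have hf' : satBody (Cn (reduct (Pstd n P) J))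
                ((modBody n I₀ x B).image (reduceElem J)) := by
              apply satBody_image.mpr
              intro e he
              rcases Finset.mem_union.mp he with he1 | he2
              · exact satBody_image.mp hsat e (Finset.mem_of_mem_erase he1)
              · obtain ⟨y, hy, rfl⟩ := Finset.mem_image.mp he2
                obtain ⟨hy1, hy2⟩ := Finset.mem_sdiff.mp hy
                have hred : reduceElem J (RuleElem.neg y) = RuleElem.top := by
                  simp [reduceElem, hout y hy1 hy2]
                rw [hred]; trivial
            obtain ⟨x', hx'1, hx'2⟩ := hCcl _ (Finset.mem_image_of_mem _ hmem) hf'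
            have hxx : x' = x := (Option.some.inj hx'1).symm
            exact ⟨x, rfl, hxx ▸ hx'2⟩
          · push_neg at hout
            obtain ⟨z, hz1, hz2, hz3⟩ := hout
            exfalso
            have hsatJ : satBody ↑J B := fires_le_sat hCJ hsat
            have hJI := keyB hI hnn hJn hsatJ
            exact hz2 (hJI ▸ hz3)
        · exfalso
          have hsatJ : satBody ↑J B := fires_le_sat hCJ hsat
          have hJI := keyB hI hnn hJn hsatJ
          exact hOdd (hJI ▸ hodd)
      · have hmem : (⟨some x, B⟩ : Rule) ∈ Pstd n P :=
          mem_Pstd.mpr ⟨⟨some x, B⟩, hrP, by rw [tf_some, tfAux, dif_neg hbad]⟩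
        exact hCcl _ (Finset.mem_image_of_mem _ hmem) hsat
  exact sandwich h1 hA hB

lemma dir2 {n : ℕ} {P : Program} {J : Finset ℕ}
    (h2 : isAnswerSet (Pstd n P) J) : isAnswerSet P J := by
  have hJc2 : closedUnder ↑J (reduct (Pstd n P) J) := answer_closed h2
  have hA : closedUnder ↑J (reduct P J) := by
    intro s hs hsat
    obtain ⟨r, hrP, rfl⟩ := Finset.mem_image.mp hs
    obtain ⟨hd, B⟩ := r
    cases hd with
    | none =>
      exact hJc2 _ (Finset.mem_image_of_mem _ (mem_Pstd.mpr ⟨⟨none, B⟩, hrP, rfl⟩)) hsat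
    | some x =>
      by_cases hbad : BadCond n x B
      · refine ⟨x, rfl, ?_⟩
        have hel := satBody_image.mp hsat _ hbad.1
        by_cases hx : x ∈ J
        · exact_mod_cast hx
        · rw [show reduceElem J (RuleElem.negneg x) = RuleElem.bot from by
            simp [reduceElem, hx]] at hel
          exact hel.elim
      · exact hJc2 _ (Finset.mem_image_of_mem _
          (mem_Pstd.mpr ⟨⟨some x, B⟩, hrP, by rw [tf_some, tfAux, dif_neg hbad]⟩)) hsat
  have hCJ : Cn (reduct P J) ⊆ ↑J := Cn_subset hA
  have hCcl : closedUnder (Cn (reduct P J)) (reduct P J) := Cn_closed hA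
  have hB : closedUnder (Cn (reduct P J)) (reduct (Pstd n P) J) := by
    intro s hs hsat
    obtain ⟨r', hr', rfl⟩ := Finset.mem_image.mp hs
    obtain ⟨r, hrP, htf⟩ := mem_Pstd.mp hr'
    obtain ⟨hd, B⟩ := r
    cases hd with
    | none =>
      have hre : r' = ⟨none, B⟩ := (Option.some.inj htf).symm
      subst hre
      exact hCcl _ (Finset.mem_image_of_mem _ hrP) hsat
    | some x =>
      rw [tf_some] at htf
      by_cases hbad : BadCond n x B
      · have hI : SB n (insert (RuleElem.pos x) B) = {hbad.2.choose} := hbad.2.choose_spec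
        set I₀ := hbad.2.choose with hI₀def
        by_cases hOdd : Odd I₀.card
        · have hre : r' = ⟨some x, modBody n I₀ x B⟩ := by
            rw [tfAux, dif_pos hbad, if_pos hOdd] at htf
            exact (Option.some.inj htf).symm
          subst hre
          refine ⟨x, rfl, ?_⟩
          by_cases hx : x ∈ J
          · have hf : satBody (Cn (reduct P J)) (B.image (reduceElem J)) := by
              apply satBody_image.mpr
              intro e heB
              by_cases henn : e = RuleElem.negneg x
              · subst henn
                rw [show reduceElem J (RuleElem.negneg x) = RuleElem.top from by
                  simp [reduceElem, hx]]
                trivial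
              · exact satBody_image.mp hsat e
                  (Finset.mem_union_left _ (Finset.mem_erase.mpr ⟨henn, heB⟩))
            obtain ⟨y, hy1, hy2⟩ := hCcl _ (Finset.mem_image_of_mem _ hrP) hf
            have hxx : y = x := (Option.some.inj hy1).symm
            exact hxx ▸ hy2
          · exfalso
            have hsatJ : satBody ↑J (modBody n I₀ x B) := fires_le_sat hCJ hsat
            have hfJ := sat_to_fires hsatJ
            obtain ⟨y, hy1, hy2⟩ := hJc2 _ (Finset.mem_image_of_mem _ hr') hfJ
            have hxx : y = x := (Option.some.inj hy1).symm
            subst hxx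
            exact hx (by exact_mod_cast hy2)
        · rw [tfAux, dif_pos hbad, if_neg hOdd] at htf
          exact absurd htf (by simp)
      · have hre : r' = ⟨some x, B⟩ := by
          rw [tfAux, dif_neg hbad] at htf
          exact (Option.some.inj htf).symm
        subst hre
        exact hCcl _ (Finset.mem_image_of_mem _ hrP) hsat
  exact sandwich h2 hA hB

/-- For every PARITY_n program with no singleton loops and all bodies consistent,
there is a standard PARITY_n program of no greater size. -/
theorem exists_standard_parity_program (n : ℕ) (P : Program)
    (hpar : isParityProgram n P) (hnsl : noSingletonLoops P)
    (hcons : allBodiesConsistent n P) :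
    ∃ P' : Program, isStandard n P' ∧ P'.card ≤ P.card := by
  refine ⟨Pstd n P, ⟨⟨?_, ?_⟩, ?_, ?_, ?_⟩, ?_⟩
  · -- progVars
    intro v hv
    obtain ⟨r', hr', hvr⟩ := Finset.mem_biUnion.mp hv
    obtain ⟨r, hrP, htf⟩ := mem_Pstd.mp hr'
    obtain ⟨hd, B⟩ := r
    cases hd with
    | none =>
      have hre : r' = ⟨none, B⟩ := (Option.some.inj htf).symm
      subst hre
      exact hpar.1 (Finset.mem_biUnion.mpr ⟨⟨none, B⟩, hrP, hvr⟩)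
    | some x =>
      rw [tf_some] at htf
      by_cases hbad : BadCond n x B
      · have hI : SB n (insert (RuleElem.pos x) B) = {hbad.2.choose} := hbad.2.choose_spec
        set I₀ := hbad.2.choose with hI₀def
        by_cases hOdd : Odd I₀.card
        · have hre : r' = ⟨some x, modBody n I₀ x B⟩ := by
            rw [tfAux, dif_pos hbad, if_pos hOdd] at htf
            exact (Option.some.inj htf).symm
          subst hre
          rcases Finset.mem_union.mp hvr with h1 | h2
          · have hvx : v = x := by simpa [ruleVars, Option.elim] using h1
            subst hvx
            refine hpar.1 (Finset.mem_biUnion.mpr ⟨⟨some v, B⟩, hrP, ?_⟩)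
            exact Finset.mem_union_left _ (by simp [Option.elim])
          · obtain ⟨e, heMod, hve⟩ := Finset.mem_biUnion.mp h2
            rcases Finset.mem_union.mp heMod with he1 | he2
            · refine hpar.1 (Finset.mem_biUnion.mpr ⟨⟨some x, B⟩, hrP, ?_⟩)
              exact Finset.mem_union_right _
                (Finset.mem_biUnion.mpr ⟨e, Finset.mem_of_mem_erase he1, hve⟩)
            · obtain ⟨y, hy, rfl⟩ := Finset.mem_image.mp he2
              obtain ⟨hy1, _⟩ := Finset.mem_sdiff.mp hy
              have hvy : v = y := by simpa [elemVars] using hve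
              exact hvy ▸ hy1
        · rw [tfAux, dif_pos hbad, if_neg hOdd] at htf
          exact absurd htf (by simp)
      · have hre : r' = ⟨some x, B⟩ := by
          rw [tfAux, dif_neg hbad] at htf
          exact (Option.some.inj htf).symm
        subst hre
        exact hpar.1 (Finset.mem_biUnion.mpr ⟨⟨some x, B⟩, hrP, hvr⟩)
  · -- answer sets
    intro J
    constructor
    · intro h
      exact (hpar.2 J).mp (dir2 h)
    · intro h
      exact dir1 hpar ((hpar.2 J).mpr h)
  · -- no singleton loops
    intro r' hr' x hhead hpos
    obtain ⟨r, hrP, htf⟩ := mem_Pstd.mp hr'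
    obtain ⟨hd, B⟩ := r
    cases hd with
    | none =>
      have hre : r' = ⟨none, B⟩ := (Option.some.inj htf).symm
      subst hre
      exact absurd hhead (by simp)
    | some x₀ =>
      rw [tf_some] at htf
      by_cases hbad : BadCond n x₀ B
      · have hI : SB n (insert (RuleElem.pos x₀) B) = {hbad.2.choose} := hbad.2.choose_spec
        set I₀ := hbad.2.choose with hI₀def
        by_cases hOdd : Odd I₀.card
        · have hre : r' = ⟨some x₀, modBody n I₀ x₀ B⟩ := by
            rw [tfAux, dif_pos hbad, if_pos hOdd] at htf
            exact (Option.some.inj htf).symm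
          subst hre
          have hxx : x₀ = x := Option.some.inj hhead
          subst hxx
          rcases Finset.mem_union.mp hpos with h1 | h2
          · exact hnsl ⟨some x₀, B⟩ hrP x₀ rfl (Finset.mem_of_mem_erase h1)
          · obtain ⟨y, _, heq⟩ := Finset.mem_image.mp h2
            exact RuleElem.noConfusion heq
        · rw [tfAux, dif_pos hbad, if_neg hOdd] at htf
          exact absurd htf (by simp)
      · have hre : r' = ⟨some x₀, B⟩ := by
          rw [tfAux, dif_neg hbad] at htf
          exact (Option.some.inj htf).symm
        subst hre
        exact hnsl ⟨some x₀, B⟩ hrP x hhead hpos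
  · -- all bodies consistent
    intro r' hr'
    obtain ⟨r, hrP, htf⟩ := mem_Pstd.mp hr'
    obtain ⟨hd, B⟩ := r
    cases hd with
    | none =>
      have hre : r' = ⟨none, B⟩ := (Option.some.inj htf).symm
      subst hre
      exact hcons ⟨none, B⟩ hrP
    | some x =>
      rw [tf_some] at htf
      by_cases hbad : BadCond n x B
      · have hI : SB n (insert (RuleElem.pos x) B) = {hbad.2.choose} := hbad.2.choose_spec
        set I₀ := hbad.2.choose with hI₀def
        by_cases hOdd : Odd I₀.card
        · have hre : r' = ⟨some x, modBody n I₀ x B⟩ := by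
            rw [tfAux, dif_pos hbad, if_pos hOdd] at htf
            exact (Option.some.inj htf).symm
          subst hre
          have hI₀mem : I₀ ∈ SB n (insert (RuleElem.pos x) B) := by rw [hI]; rfl
          obtain ⟨hI₀sub, hI₀sat⟩ := hI₀mem
          refine ⟨I₀, hI₀sub, fun e he => ?_⟩
          rcases Finset.mem_union.mp he with he1 | he2
          · exact hI₀sat e (Finset.mem_insert_of_mem (Finset.mem_of_mem_erase he1))
          · obtain ⟨y, hy, rfl⟩ := Finset.mem_image.mp he2
            obtain ⟨_, hy2⟩ := Finset.mem_sdiff.mp hy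
            show y ∉ (↑I₀ : Set ℕ)
            exact_mod_cast hy2
        · rw [tfAux, dif_pos hbad, if_neg hOdd] at htf
          exact absurd htf (by simp)
      · have hre : r' = ⟨some x, B⟩ := by
          rw [tfAux, dif_neg hbad] at htf
          exact (Option.some.inj htf).symm
        subst hre
        exact hcons ⟨some x, B⟩ hrP
  · -- standardness condition
    intro r' hr' x hhead hsing
    obtain ⟨r, hrP, htf⟩ := mem_Pstd.mp hr'
    obtain ⟨hd, B⟩ := r
    cases hd with
    | none =>
      have hre : r' = ⟨none, B⟩ := (Option.some.inj htf).symm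
      subst hre
      exact absurd hhead (by simp)
    | some x₀ =>
      rw [tf_some] at htf
      by_cases hbad : BadCond n x₀ B
      · have hI : SB n (insert (RuleElem.pos x₀) B) = {hbad.2.choose} := hbad.2.choose_spec
        set I₀ := hbad.2.choose with hI₀def
        by_cases hOdd : Odd I₀.card
        · have hre : r' = ⟨some x₀, modBody n I₀ x₀ B⟩ := by
            rw [tfAux, dif_pos hbad, if_pos hOdd] at htf
            exact (Option.some.inj htf).symm
          subst hre
          have hxx : x₀ = x := Option.some.inj hhead
          subst hxx
          intro hmem
          rcases Finset.mem_union.mp hmem with h1 | h2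
          · exact (Finset.mem_erase.mp h1).1 rfl
          · obtain ⟨y, _, heq⟩ := Finset.mem_image.mp h2
            exact RuleElem.noConfusion heq
        · rw [tfAux, dif_pos hbad, if_neg hOdd] at htf
          exact absurd htf (by simp)
      · have hre : r' = ⟨some x₀, B⟩ := by
          rw [tfAux, dif_neg hbad] at htf
          exact (Option.some.inj htf).symm
        subst hre
        have hxx : x₀ = x := Option.some.inj hhead
        subst hxx
        intro hmem
        exact hbad ⟨hmem, hsing⟩
  · -- cardinality
    calc (Pstd n P).card ≤ ∑ r ∈ P, (tf n r).toFinset.card := Finset.card_biUnion_le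
      _ ≤ ∑ _r ∈ P, 1 := Finset.sum_le_sum (fun r _ => by cases h : tf n r <;> simp [h])
      _ = P.card := by simp
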